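/- In the Černý automaton C_n, for a two-element subset T = {p, q} with p < q, let d = min{q − p, n + p − q} and set α = n − p − 1 if d = q − p, α = n − q − 1 otherwise. Then the word w = b^α a (b^{n−1} a)^{d−1} synchronizes T: |T·w| = 1, with T·w = {0}. -/
import Mathlib


/-- The action of a DFA's transition function `δ` extended to words. -/
def actW {Q A : Type*} (δ : Q → A → Q) (q : Q) (w : List A) : Q := w.foldl δ q

/-- The Černý automaton `C_n` on states `Fin n` over the alphabet `Bool`:
the letter `b` (encoded `true`) acts as the cycle `i ↦ i + 1 (mod n)`, and the
letter `a` (encoded `false`) fixes every state except `n − 1`, which it sends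
to `0`. -/
def cerny {n : ℕ} (i : Fin n) (x : Bool) : Fin n :=
  if x then ⟨(i.val + 1) % n, Nat.mod_lt _ i.pos⟩
  else if i.val = n - 1 then ⟨0, i.pos⟩ else i

lemma actW_append {Q A : Type*} (δ : Q → A → Q) (q : Q) (u v : List A) :
    actW δ q (u ++ v) = actW δ (actW δ q u) v := List.foldl_append ..

lemma actW_b {n : ℕ} (hn : 0 < n) (r : Fin n) (k : ℕ) :
    actW cerny r (List.replicate k true) = ⟨(r.val + k) % n, Nat.mod_lt _ hn⟩ := by
  induction k generalizing r with
  | zero => simp [actW, Nat.mod_eq_of_lt r.isLt]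
  | succ k ih =>
    rw [List.replicate_succ]
    show actW cerny (cerny r true) (List.replicate k true) = _
    rw [ih]
    apply Fin.ext
    simp only [cerny, if_pos]
    rw [Nat.mod_add_mod]
    congr 1
    omega

lemma cerny_false_val {n : ℕ} (s : Fin n) :
    (cerny s false).val = if s.val = n - 1 then 0 else s.val := by
  simp only [cerny, Bool.false_eq_true, if_false]
  split <;> rfl

lemma actW_block {n : ℕ} (hn : 2 ≤ n) (r : Fin n) :
    actW cerny r (List.replicate (n-1) true ++ [false]) = ⟨r.val - 1, by omega⟩ := by
  rw [actW_append, actW_b (by omega)]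
  show cerny _ false = _
  have hr := r.isLt
  apply Fin.ext
  rw [cerny_false_val]
  rcases Nat.eq_zero_or_pos r.val with h0 | h1
  · have h : (r.val + (n-1)) % n = n - 1 := by
      rw [h0, Nat.zero_add, Nat.mod_eq_of_lt (by omega)]
    simp [h, h0]
  · have h : (r.val + (n-1)) % n = r.val - 1 := by
      have : r.val + (n-1) = n + (r.val - 1) := by omega
      rw [this, Nat.add_mod_left, Nat.mod_eq_of_lt (by omega)]
    simp only [h]
    rw [if_neg (by omega)]

lemma actW_blocks {n : ℕ} (hn : 2 ≤ n) (r : Fin n) (m : ℕ) :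
    actW cerny r
      (List.flatten (List.replicate m (List.replicate (n-1) true ++ [false])))
      = ⟨r.val - m, by omega⟩ := by
  induction m generalizing r with
  | zero => simp [actW]
  | succ m ih =>
    rw [List.replicate_succ, List.flatten_cons, actW_append, actW_block hn, ih]
    apply Fin.ext
    simp
    omega

/-- in `C_n`, for a pair `T = {p, q}` with `p < q`, distance
`d = min (q − p) (n + p − q)` and `α` as prescribed, the word
`w = b^α a (b^{n−1} a)^{d−1}` synchronizes `T` to the state `0`. -/
theorem stmt_16 (n : ℕ) (hn : 2 ≤ n) (p q : Fin n) (hpq : p < q) (d α : ℕ)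
    (hd : d = min (q.val - p.val) (n + p.val - q.val))
    (hα : α = if d = q.val - p.val then n - p.val - 1 else n - q.val - 1) :
    ({p, q} : Finset (Fin n)).image (fun r => actW cerny r
        (List.replicate α true ++ [false] ++
          (List.replicate (d - 1) (List.replicate (n - 1) true ++ [false])).flatten))
      = {(⟨0, by omega⟩ : Fin n)} := by
  have hp := p.isLt
  have hq := q.isLt
  have hlt : p.val < q.val := hpq
  have hone : ∀ r : Fin n, r = p ∨ r = q →
      actW cerny r (List.replicate α true ++ [false] ++
        (List.replicate (d - 1) (List.replicate (n - 1) true ++ [false])).flatten)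
      = (⟨0, by omega⟩ : Fin n) := by
    intro r hr
    rw [actW_append, actW_append, actW_b (by omega)]
    show actW cerny (cerny _ false) _ = _
    rw [actW_blocks hn]
    apply Fin.ext
    show (cerny (⟨(r.val + α) % n, _⟩ : Fin n) false).val - (d - 1) = 0
    rw [cerny_false_val]
    simp only [Fin.val_mk]
    by_cases hdc : d = q.val - p.val
    · rw [hα, if_pos hdc] at *
      rcases hr with rfl | rfl
      · have hm : (r.val + (n - r.val - 1)) % n = n - 1 := by
          have h2 : r.val + (n - r.val - 1) = n - 1 := by omega
          rw [h2, Nat.mod_eq_of_lt (by omega)]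
        rw [hm, if_pos rfl]
        omega
      · have hm : (r.val + (n - p.val - 1)) % n = d - 1 := by
          have : r.val + (n - p.val - 1) = n + (d - 1) := by omega
          rw [this, Nat.add_mod_left, Nat.mod_eq_of_lt (by omega)]
        rw [hm, if_neg (by omega)]
        omega
    · have hdv : d = n + p.val - q.val := by omega
      have hsm : d < q.val - p.val := by omega
      rw [hα, if_neg hdc] at *
      rcases hr with rfl | rfl
      · have hm : (r.val + (n - q.val - 1)) % n = d - 1 := by
          have : r.val + (n - q.val - 1) = d - 1 := by omega
          rw [this, Nat.mod_eq_of_lt (by omega)]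
        rw [hm, if_neg (by omega)]
        omega
      · have hm : (r.val + (n - r.val - 1)) % n = n - 1 := by
          have h2 : r.val + (n - r.val - 1) = n - 1 := by omega
          rw [h2, Nat.mod_eq_of_lt (by omega)]
        rw [hm, if_pos rfl]
        omega
  rw [Finset.image_insert, Finset.image_singleton,
    hone p (Or.inl rfl), hone q (Or.inr rfl)]
  simp
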